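/- For the QBF formula Ψ = ∃x₁∀y₁…∃x_n∀y_n Φ with Φ a CNF over these variables, the MEMDP 𝒬 constructed with one environment per clause (where existential-variable states offer actions ⊤/⊥ choosing the assignment, universal-variable states branch uniformly to both assignments, and an assignment state moves to the target W in environment i iff it satisfies clause Φ_i, else to the next variable state, with a losing sink after the last variable) has a winning policy for almost-sure reachability of {W} if and only if Ψ is true. -/

import Mathlib

open scoped Classical

/-- Probability of reaching the target set `T` within `n` steps, starting
from state `s` with history `h`, under transition kernel `p` and
(history-dependent, randomized) policy `σ`. The probability of reaching `T`
is the supremum over `n` of these step-bounded probabilities. -/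
noncomputable def reachN {S A : Type*} [Fintype S] [Fintype A]
    (p : S → A → S → ℝ) (σ : List S → A → ℝ) (T : Set S) :
    ℕ → List S → S → ℝ
  | 0, _, s => if s ∈ T then 1 else 0
  | n + 1, h, s =>
      if s ∈ T then 1
      else ∑ a, σ (h ++ [s]) a * ∑ s', p s a s' * reachN p σ T n (h ++ [s]) s'

/-- A randomized history-dependent policy: a probability distribution over
actions for every history. -/
def IsPolicy {S A : Type*} [Fintype A] (σ : List S → A → ℝ) : Prop :=
  ∀ h : List S, (∀ a, 0 ≤ σ h a) ∧ ∑ a, σ h a = 1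

/-- A stochastic transition kernel. -/
def IsKernel {S A : Type*} [Fintype S] (p : S → A → S → ℝ) : Prop :=
  ∀ s a, (∀ s', 0 ≤ p s a s') ∧ ∑ s', p s a s' = 1

/-- Truth of the quantified Boolean formula
`∃x₁ ∀y₁ ∃x₂ ∀y₂ … ∃x_n ∀y_n. sat`, where the variables are encoded as
pairs `(j, t) : Fin n × Bool` (`x_{j+1}` for `t = false`, `y_{j+1}` for
`t = true`) and `sat` is a predicate on full assignments. -/
def QBFTrue : (n : ℕ) → ((Fin n × Bool → Bool) → Prop) → Prop
  | 0, sat => sat (fun v => v.1.elim0)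
  | n + 1, sat =>
      ∃ bx : Bool, ∀ by' : Bool,
        QBFTrue n (fun v =>
          sat (fun w =>
            Fin.cases (motive := fun _ => Bool)
              (if w.2 then by' else bx) (fun j => v (j, w.2)) w.1))

/-- States of the MEMDP `𝒬` constructed from the QBF formula:
`var j false` is the state `x_{j+1}`, `var j true` is `y_{j+1}`;
`asg j t b` is the assignment state `v⊤` (`b = true`) or `v⊥` (`b = false`)
of the variable `v = (j, t)`; `win` is the target `W`; `sink` is the losing
sink `x_{n+1}`. -/
inductive QSt (n : ℕ) : Type
  | var (j : Fin n) (t : Bool) : QSt n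
  | asg (j : Fin n) (t : Bool) (b : Bool) : QSt n
  | win : QSt n
  | sink : QSt n
  deriving DecidableEq, Fintype

/-- Actions of `𝒬`: `some b` are the assignment actions `⊤`/`⊥`, and `none`
is the action `any` (`α_⊗`). -/
abbrev QAct := Option Bool

/-- The variable state following variable `(j, t)`: after `x_{j+1}` comes
`y_{j+1}`; after `y_{j+1}` comes `x_{j+2}`, or the sink after `y_n`. -/
def nextVar (n : ℕ) (j : Fin n) (t : Bool) : QSt n :=
  if t = false then QSt.var j true
  else if h : (j : ℕ) + 1 < n then QSt.var ⟨(j : ℕ) + 1, h⟩ false else QSt.sink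

/-- Transition probabilities of `𝒬` in the environment of clause `i`:
an existential-variable state `x` offers actions `⊤`/`⊥` choosing the
assignment, a universal-variable state `y` branches uniformly to both
assignments, and an assignment state moves to `W` in environment `i` iff the
chosen literal satisfies clause `Φ i` (a clause being a finite set of
literals, i.e. of pairs (variable, polarity)), else to the next variable
state; all other actions lead to the losing sink, and `W` and the sink are
absorbing. -/
noncomputable def QP (n m : ℕ) (Φ : Fin m → Finset ((Fin n × Bool) × Bool))
    (i : Fin m) : QSt n → QAct → QSt n → ℝ
  | QSt.var j false, some b, y => if y = QSt.asg j false b then 1 else 0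
  | QSt.var _ false, none, y => if y = QSt.sink then 1 else 0
  | QSt.var j true, none, y =>
      if y = QSt.asg j true true ∨ y = QSt.asg j true false then 1 / 2 else 0
  | QSt.var _ true, some _, y => if y = QSt.sink then 1 else 0
  | QSt.asg j t b, none, y =>
      if ((j, t), b) ∈ Φ i then (if y = QSt.win then 1 else 0)
      else (if y = nextVar n j t then 1 else 0)
  | QSt.asg _ _ _, some _, y => if y = QSt.sink then 1 else 0
  | QSt.win, _, y => if y = QSt.win then 1 else 0
  | QSt.sink, _, y => if y = QSt.sink then 1 else 0


section General

open Finset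

variable {S A : Type*} [Fintype S] [Fintype A]
variable {p : S → A → S → ℝ} {σ : List S → A → ℝ} {T : Set S}

theorem reachN_nonneg (hp : IsKernel p) (hσ : IsPolicy σ) (k : ℕ) :
    ∀ h s, 0 ≤ reachN p σ T k h s := by
  induction k with
  | zero => intro h s; rw [reachN]; split <;> norm_num
  | succ k ih =>
    intro h s; rw [reachN]; split
    · norm_num
    · refine Finset.sum_nonneg fun a _ => mul_nonneg ((hσ _).1 a) ?_
      exact Finset.sum_nonneg fun s' _ => mul_nonneg ((hp s a).1 s') (ih _ _)

theorem reachN_le_one (hp : IsKernel p) (hσ : IsPolicy σ) (k : ℕ) :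
    ∀ h s, reachN p σ T k h s ≤ 1 := by
  induction k with
  | zero => intro h s; rw [reachN]; split <;> norm_num
  | succ k ih =>
    intro h s; rw [reachN]; split
    · exact le_refl 1
    · calc ∑ a, σ (h++[s]) a * ∑ s', p s a s' * reachN p σ T k (h++[s]) s'
          ≤ ∑ a, σ (h++[s]) a * 1 := by
            refine Finset.sum_le_sum fun a _ => mul_le_mul_of_nonneg_left ?_ ((hσ _).1 a)
            calc ∑ s', p s a s' * reachN p σ T k (h++[s]) s'
                ≤ ∑ s', p s a s' * 1 := Finset.sum_le_sum fun s' _ =>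
                  mul_le_mul_of_nonneg_left (ih _ _) ((hp s a).1 s')
              _ = 1 := by simp [(hp s a).2]
        _ = 1 := by simp [(hσ _).2]

theorem reachN_mono (hp : IsKernel p) (hσ : IsPolicy σ) (k : ℕ) :
    ∀ h s, reachN p σ T k h s ≤ reachN p σ T (k+1) h s := by
  induction k with
  | zero =>
    intro h s
    rw [reachN, reachN]
    by_cases hs : s ∈ T
    · simp [hs]
    · simp only [hs, if_false]
      refine Finset.sum_nonneg fun a _ => mul_nonneg ((hσ _).1 a) ?_
      refine Finset.sum_nonneg fun s' _ => mul_nonneg ((hp s a).1 s') ?_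
      exact reachN_nonneg hp hσ 0 _ _
  | succ k ih =>
    intro h s
    rw [reachN, show k+1+1 = (k+1)+1 from rfl, reachN]
    by_cases hs : s ∈ T
    · simp [hs]
    · simp only [hs, if_false]
      refine Finset.sum_le_sum fun a _ => mul_le_mul_of_nonneg_left ?_ ((hσ _).1 a)
      exact Finset.sum_le_sum fun s' _ => mul_le_mul_of_nonneg_left (ih _ _) ((hp s a).1 s')

theorem reachN_mono' (hp : IsKernel p) (hσ : IsPolicy σ) {k k' : ℕ} (hk : k ≤ k')
    (h : List S) (s : S) : reachN p σ T k h s ≤ reachN p σ T k' h s := by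
  induction k' with
  | zero => have : k = 0 := Nat.le_zero.mp hk; subst this; exact le_refl _
  | succ k' ih =>
    rcases Nat.lt_or_ge k (k'+1) with h' | h'
    · exact le_trans (ih (Nat.lt_succ_iff.mp h')) (reachN_mono hp hσ k' h s)
    · have : k = k' + 1 := le_antisymm hk h'
      subst this; exact le_refl _

theorem extract_one {ι : Type*} [Fintype ι] {w v : ι → ℝ}
    (hw0 : ∀ a, 0 ≤ w a) (hw1 : ∑ a, w a = 1) (hv : ∀ a, v a ≤ 1)
    (h : ∑ a, w a * v a = 1) : ∀ a, 0 < w a → v a = 1 := by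
  have key : ∑ a, w a * (1 - v a) = 0 := by
    have : ∑ a, w a * (1 - v a) = (∑ a, w a) - ∑ a, w a * v a := by
      rw [← Finset.sum_sub_distrib]
      exact Finset.sum_congr rfl fun a _ => by ring
    rw [this, hw1, h, sub_self]
  intro a ha
  have hterm : ∀ b ∈ Finset.univ, 0 ≤ w b * (1 - v b) := fun b _ =>
    mul_nonneg (hw0 b) (by linarith [hv b])
  have := (Finset.sum_eq_zero_iff_of_nonneg hterm).mp key a (Finset.mem_univ a)
  have h1v : 1 - v a = 0 := by
    rcases mul_eq_zero.mp this with h' | h'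
    · exact absurd h' (ne_of_gt ha)
    · exact h'
  linarith

theorem mul_eq_one_right {a b : ℝ} (ha0 : 0 ≤ a) (ha1 : a ≤ 1) (hb : b ≤ 1)
    (h : a * b = 1) : b = 1 := by
  have h1 : a = 1 := le_antisymm ha1 (by nlinarith)
  rw [h1, one_mul] at h; exact h

end General


section Sums

theorem sum_ind {S : Type*} [Fintype S] [DecidableEq S] (A : S) (c : ℝ) (g : S → ℝ) :
    ∑ y, (if y = A then c else 0) * g y = c * g A := by
  have h : ∀ y, (if y = A then c else 0) * g y = if y = A then c * g y else 0 :=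
    fun y => by split <;> simp
  rw [Finset.sum_congr rfl fun y _ => h y, Finset.sum_ite_eq']
  simp

theorem sum_ite_or {S : Type*} [Fintype S] [DecidableEq S] {A B : S} (hAB : A ≠ B)
    (c : ℝ) (g : S → ℝ) :
    ∑ y, (if y = A ∨ y = B then c else 0) * g y = c * g A + c * g B := by
  have h : ∀ y, (if y = A ∨ y = B then c else 0) * g y
      = (if y = A then c * g y else 0) + (if y = B then c * g y else 0) := by
    intro y
    by_cases h1 : y = A <;> by_cases h2 : y = B
    · exact absurd (h1.symm.trans h2) hAB
    all_goals simp [h1, h2, hAB, hAB.symm]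
  rw [Finset.sum_congr rfl fun y _ => h y, Finset.sum_add_distrib,
    Finset.sum_ite_eq', Finset.sum_ite_eq']
  simp

end Sums

section QPFacts

variable {n m : ℕ} {Φ : Fin m → Finset ((Fin n × Bool) × Bool)} {i : Fin m}
variable {σ : List (QSt n) → QAct → ℝ}

theorem QP_kernel : IsKernel (QP n m Φ i) := by
  intro s a
  constructor
  · intro s'
    cases s with
    | var j t =>
      cases t <;> cases a <;> simp only [QP] <;> (repeat' split) <;> norm_num
    | asg j t b =>
      cases a <;> simp only [QP] <;> (repeat' split) <;> norm_num
    | win => simp only [QP]; split <;> norm_num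
    | sink => simp only [QP]; split <;> norm_num
  · have single : ∀ A : QSt n, ∑ y, (if y = A then (1:ℝ) else 0) = 1 := by
      intro A; rw [Finset.sum_ite_eq']; simp
    cases s with
    | var j t =>
      cases t with
      | false => cases a <;> simp only [QP] <;> exact single _
      | true =>
        cases a with
        | some b => simp only [QP]; exact single _
        | none =>
          simp only [QP]
          have hAB : QSt.asg j true true ≠ QSt.asg j true false := by simp
          have := sum_ite_or (S := QSt n) hAB (1/2) (fun _ => 1)
          simp only [mul_one] at this
          rw [this]; norm_num
    | asg j t b =>
      cases a with
      | some b' => simp only [QP]; exact single _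
      | none =>
        simp only [QP]
        by_cases hmem : ((j,t),b) ∈ Φ i
        · simp only [hmem, if_true]; exact single _
        · simp only [hmem, if_false]; exact single _
    | win => simp only [QP]; exact single _
    | sink => simp only [QP]; exact single _

theorem reachN_win (k : ℕ) (h : List (QSt n)) :
    reachN (QP n m Φ i) σ {QSt.win} k h QSt.win = 1 := by
  cases k <;> rw [reachN] <;> simp

theorem reachN_sink (k : ℕ) (h : List (QSt n)) :
    reachN (QP n m Φ i) σ {QSt.win} k h QSt.sink = 0 := by
  induction k generalizing h with
  | zero => rw [reachN]; simp
  | succ k ih =>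
    rw [reachN, if_neg (by simp)]
    refine Finset.sum_eq_zero fun a _ => ?_
    simp only [QP]
    rw [sum_ind, ih, mul_zero, mul_zero]

theorem step_varF (k : ℕ) (h : List (QSt n)) (j : Fin n) :
    reachN (QP n m Φ i) σ {QSt.win} (k+1) h (QSt.var j false)
      = ∑ b : Bool, σ (h ++ [QSt.var j false]) (some b) *
          reachN (QP n m Φ i) σ {QSt.win} k (h ++ [QSt.var j false]) (QSt.asg j false b) := by
  rw [reachN, if_neg (by simp), Fintype.sum_option]
  have hnone : ∑ s', QP n m Φ i (QSt.var j false) none s' *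
      reachN (QP n m Φ i) σ {QSt.win} k (h ++ [QSt.var j false]) s' = 0 := by
    simp only [QP]; rw [sum_ind, reachN_sink, mul_zero]
  rw [hnone, mul_zero, zero_add]
  refine Finset.sum_congr rfl fun b _ => ?_
  congr 1
  simp only [QP]; rw [sum_ind, one_mul]

theorem step_varT (k : ℕ) (h : List (QSt n)) (j : Fin n) :
    reachN (QP n m Φ i) σ {QSt.win} (k+1) h (QSt.var j true)
      = σ (h ++ [QSt.var j true]) none *
          (1/2 * reachN (QP n m Φ i) σ {QSt.win} k (h ++ [QSt.var j true]) (QSt.asg j true true)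
           + 1/2 * reachN (QP n m Φ i) σ {QSt.win} k (h ++ [QSt.var j true]) (QSt.asg j true false)) := by
  rw [reachN, if_neg (by simp), Fintype.sum_option]
  have hsome : ∀ b : Bool, σ (h ++ [QSt.var j true]) (some b) *
      (∑ s', QP n m Φ i (QSt.var j true) (some b) s' *
        reachN (QP n m Φ i) σ {QSt.win} k (h ++ [QSt.var j true]) s') = 0 := by
    intro b
    simp only [QP]; rw [sum_ind, reachN_sink, mul_zero, mul_zero]
  rw [Finset.sum_congr rfl fun b _ => hsome b]
  simp only [Finset.sum_const, smul_zero, add_zero]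
  congr 1
  simp only [QP]
  exact sum_ite_or (show QSt.asg j true true ≠ QSt.asg j true false by simp) (1/2) _

theorem step_asg (k : ℕ) (h : List (QSt n)) (j : Fin n) (t b : Bool) :
    reachN (QP n m Φ i) σ {QSt.win} (k+1) h (QSt.asg j t b)
      = σ (h ++ [QSt.asg j t b]) none *
          (if ((j,t),b) ∈ Φ i then 1
           else reachN (QP n m Φ i) σ {QSt.win} k (h ++ [QSt.asg j t b]) (nextVar n j t)) := by
  rw [reachN, if_neg (by simp), Fintype.sum_option]
  have hsome : ∀ b' : Bool, σ (h ++ [QSt.asg j t b]) (some b') *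
      (∑ s', QP n m Φ i (QSt.asg j t b) (some b') s' *
        reachN (QP n m Φ i) σ {QSt.win} k (h ++ [QSt.asg j t b]) s') = 0 := by
    intro b'
    simp only [QP]; rw [sum_ind, reachN_sink, mul_zero, mul_zero]
  rw [Finset.sum_congr rfl fun b _ => hsome b]
  simp only [Finset.sum_const, smul_zero, add_zero]
  congr 1
  simp only [QP]
  by_cases hmem : ((j,t),b) ∈ Φ i
  · simp only [hmem, if_true]; rw [sum_ind, reachN_win, mul_one]
  · simp only [hmem, if_false]; rw [sum_ind, one_mul]

end QPFacts


section Rank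

def rank (n : ℕ) : QSt n → ℕ
  | QSt.var j false => 4 * (n - j)
  | QSt.var j true => 4 * (n - j) - 2
  | QSt.asg j false _ => 4 * (n - j) - 1
  | QSt.asg j true _ => 4 * (n - j) - 3
  | QSt.win => 0
  | QSt.sink => 0

variable {n m : ℕ} {Φ : Fin m → Finset ((Fin n × Bool) × Bool)} {i : Fin m}
variable {σ : List (QSt n) → QAct → ℝ}

theorem rank_lt {s : QSt n} {a : QAct} {s' : QSt n}
    (hw : s ≠ QSt.win) (hs : s ≠ QSt.sink) (hne : QP n m Φ i s a s' ≠ 0) :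
    s' = QSt.win ∨ s' = QSt.sink ∨ rank n s' < rank n s := by
  cases s with
  | win => exact absurd rfl hw
  | sink => exact absurd rfl hs
  | var j t =>
    have hj : (j : ℕ) < n := j.isLt
    cases t with
    | false =>
      cases a with
      | some b =>
        simp only [QP] at hne
        split at hne
        · right; right
          subst_vars
          simp only [rank]
          omega
        · exact absurd rfl hne
      | none =>
        simp only [QP] at hne
        split at hne
        · right; left; assumption
        · exact absurd rfl hne
    | true =>
      cases a with
      | some b =>
        simp only [QP] at hne
        split at hne
        · right; left; assumption
        · exact absurd rfl hne
      | none =>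
        simp only [QP] at hne
        split at hne
        · rcases ‹s' = QSt.asg j true true ∨ s' = QSt.asg j true false› with h' | h' <;>
            (right; right; subst h'; simp only [rank]; omega)
        · exact absurd rfl hne
  | asg j t b =>
    have hj : (j : ℕ) < n := j.isLt
    cases a with
    | some b' =>
      simp only [QP] at hne
      split at hne
      · right; left; assumption
      · exact absurd rfl hne
    | none =>
      simp only [QP] at hne
      split at hne
      · split at hne
        · left; assumption
        · exact absurd rfl hne
      · split at hne
        · subst_vars
          cases t with
          | false =>
            have hnv : nextVar n j false = QSt.var j true := by simp [nextVar]
            rw [hnv]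
            right; right
            simp only [rank]
            omega
          | true =>
            have hnv : nextVar n j true
                = if h : (j:ℕ)+1 < n then QSt.var ⟨(j:ℕ)+1,h⟩ false else QSt.sink := by
              simp [nextVar]
            by_cases hlt : (j:ℕ)+1 < n
            · rw [hnv, dif_pos hlt]
              right; right
              simp only [rank]
              omega
            · rw [hnv, dif_neg hlt]
              right; left; rfl
        · exact absurd rfl hne

theorem reachN_stab (hσ : IsPolicy σ) (k : ℕ) :
    ∀ (h : List (QSt n)) (s : QSt n), rank n s ≤ k →
      reachN (QP n m Φ i) σ {QSt.win} (k+1) h s = reachN (QP n m Φ i) σ {QSt.win} k h s := by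
  induction k with
  | zero =>
    intro h s hr
    cases s with
    | var j t =>
      have hj : (j : ℕ) < n := j.isLt
      cases t <;> (simp only [rank] at hr; omega)
    | asg j t b =>
      have hj : (j : ℕ) < n := j.isLt
      cases t <;> (simp only [rank] at hr; omega)
    | win => rw [reachN_win, reachN_win]
    | sink => rw [reachN_sink, reachN_sink]
  | succ k ih =>
    intro h s hr
    by_cases hw : s = QSt.win
    · subst hw; rw [reachN_win, reachN_win]
    by_cases hs : s = QSt.sink
    · subst hs; rw [reachN_sink, reachN_sink]
    have hT : s ∉ ({QSt.win} : Set (QSt n)) := by simpa using hw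
    rw [reachN, reachN, if_neg hT, if_neg hT]
    refine Finset.sum_congr rfl fun a _ => ?_
    congr 1
    refine Finset.sum_congr rfl fun s' _ => ?_
    by_cases hq : QP n m Φ i s a s' = 0
    · rw [hq, zero_mul, zero_mul]
    congr 1
    rcases rank_lt hw hs hq with h' | h' | h'
    · subst h'; rw [reachN_win, reachN_win]
    · subst h'; rw [reachN_sink, reachN_sink]
    · exact ih _ _ (by omega)

theorem reachN_stab' (hσ : IsPolicy σ) (h : List (QSt n)) (s : QSt n) (k : ℕ)
    (hk : rank n s ≤ k) :
    reachN (QP n m Φ i) σ {QSt.win} k h s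
      = reachN (QP n m Φ i) σ {QSt.win} (rank n s) h s := by
  induction k with
  | zero => have : rank n s = 0 := Nat.le_zero.mp hk; rw [this]
  | succ k ih =>
    rcases Nat.lt_or_ge (rank n s) (k+1) with h' | h'
    · rw [reachN_stab hσ k h s (Nat.lt_succ_iff.mp h'), ih (Nat.lt_succ_iff.mp h')]
    · have : rank n s = k + 1 := le_antisymm hk h'
      rw [this]

theorem iSup_reach (hσ : IsPolicy σ) (h : List (QSt n)) (s : QSt n) :
    (⨆ k, reachN (QP n m Φ i) σ {QSt.win} k h s)
      = reachN (QP n m Φ i) σ {QSt.win} (rank n s) h s := by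
  apply le_antisymm
  · apply ciSup_le
    intro k
    rcases le_or_gt k (rank n s) with hk | hk
    · exact reachN_mono' QP_kernel hσ hk h s
    · rw [reachN_stab' hσ h s k (le_of_lt hk)]
  · have hb : BddAbove (Set.range fun k => reachN (QP n m Φ i) σ {QSt.win} k h s) := by
      refine ⟨1, ?_⟩
      rintro x ⟨k, rfl⟩
      exact reachN_le_one QP_kernel hσ k h s
    exact le_ciSup hb (rank n s)

end Rank


section Skolem

/-- The assignment determined by a Skolem function `f` for the existential
variables and values `c` for the universal variables. -/
def asgn (n : ℕ) (f : List Bool → Bool) (c : Fin n → Bool) : Fin n × Bool → Bool :=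
  fun w => if w.2 then c w.1 else f ((List.ofFn c).take w.1)

theorem qbf_skolem : ∀ (n : ℕ) (sat : (Fin n × Bool → Bool) → Prop),
    QBFTrue n sat ↔ ∃ f : List Bool → Bool, ∀ c : Fin n → Bool, sat (asgn n f c) := by
  intro n
  induction n with
  | zero =>
    intro sat
    rw [QBFTrue]
    constructor
    · intro h
      refine ⟨fun _ => true, fun c => ?_⟩
      have he : asgn 0 (fun _ => true) c = fun v => v.1.elim0 := by
        funext w; exact w.1.elim0
      rw [he]; exact h
    · rintro ⟨f, hf⟩
      have := hf (fun j => j.elim0)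
      have he : asgn 0 f (fun j => j.elim0) = fun v => v.1.elim0 := by
        funext w; exact w.1.elim0
      rw [he] at this; exact this
  | succ n ih =>
    intro sat
    rw [QBFTrue]
    constructor
    · rintro ⟨bx, hbx⟩
      have h1 : ∀ by' : Bool, ∃ f, ∀ c : Fin n → Bool,
          sat (fun w =>
            Fin.cases (motive := fun _ => Bool)
              (if w.2 then by' else bx) (fun j => asgn n f c (j, w.2)) w.1) := by
        intro by'
        exact (ih _).mp (hbx by')
      choose F hF using h1
      refine ⟨fun l => match l with | [] => bx | c0 :: r => F c0 r, fun C => ?_⟩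
      have key := hF (C 0) (fun j => C j.succ)
      have he : asgn (n+1) (fun l => match l with | [] => bx | c0 :: r => F c0 r) C
          = fun w => Fin.cases (motive := fun _ => Bool)
              (if w.2 then C 0 else bx)
              (fun j => asgn n (F (C 0)) (fun j' => C j'.succ) (j, w.2)) w.1 := by
        funext w
        obtain ⟨jw, tw⟩ := w
        refine Fin.cases ?_ ?_ jw
        · cases tw <;> simp [asgn]
        · intro j
          rw [Fin.cases_succ]
          cases tw with
          | true => simp [asgn]
          | false =>
            simp only [asgn, if_false, Bool.false_eq_true]
            have : (List.ofFn C).take ((j.succ : Fin (n+1)) : ℕ)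
                = C 0 :: (List.ofFn (fun j' : Fin n => C j'.succ)).take (j : ℕ) := by
              rw [List.ofFn_succ]
              rfl
            rw [this]
      rw [he]; exact key
    · rintro ⟨F, hF⟩
      refine ⟨F [], fun by' => (ih _).mpr ⟨fun l => F (by' :: l), fun c => ?_⟩⟩
      have key := hF (Fin.cases by' c)
      have he : asgn (n+1) F (Fin.cases by' c)
          = fun w => Fin.cases (motive := fun _ => Bool)
              (if w.2 then by' else F [])
              (fun j => asgn n (fun l => F (by' :: l)) c (j, w.2)) w.1 := by
        funext w
        obtain ⟨jw, tw⟩ := w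
        refine Fin.cases ?_ ?_ jw
        · cases tw <;> simp [asgn]
        · intro j
          rw [Fin.cases_succ]
          cases tw with
          | true => simp [asgn]
          | false =>
            simp only [asgn, if_false, Bool.false_eq_true]
            have h2 : (List.ofFn (Fin.cases (motive := fun _ => Bool) by' c)).take
                  ((j.succ : Fin (n+1)) : ℕ)
                = by' :: (List.ofFn c).take (j : ℕ) := by
              rw [List.ofFn_succ]
              have : (fun i : Fin n => (Fin.cases (motive := fun _ => Bool) by' c) i.succ)
                  = c := by
                funext i; rw [Fin.cases_succ]
              rw [Fin.cases_zero]
              rw [show (List.ofFn fun i : Fin n =>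
                (Fin.cases (motive := fun _ => Bool) by' c) i.succ) = List.ofFn c from by
                  rw [this]]
              rfl
            rw [h2]
      rw [he] at key; exact key

end Skolem


section Assign

variable {n : ℕ}

/-- Position of a variable in the quantifier order. -/
def pos (w : Fin n × Bool) : ℕ := 2 * (w.1 : ℕ) + (if w.2 then 1 else 0)

/-- Assignment read off from a list of universal values. -/
def extc (n : ℕ) (L : List Bool) : Fin n → Bool := fun j => L.getD (j : ℕ) false

theorem take_ofFn_agree (jv : ℕ) (c₁ c₂ : Fin n → Bool)
    (hag : ∀ j' : Fin n, (j' : ℕ) < jv → c₁ j' = c₂ j') {k : ℕ} (hk : k ≤ jv) :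
    (List.ofFn c₁).take k = (List.ofFn c₂).take k := by
  apply List.ext_getElem
  · simp
  · intro q h₁ h₂
    rw [List.getElem_take, List.getElem_take]
    simp only [List.length_take, List.length_ofFn] at h₁
    have hq : q < n := lt_of_lt_of_le (lt_min_iff.mp h₁).2 (le_refl n)
    rw [List.getElem_ofFn, List.getElem_ofFn]
    exact hag ⟨q, hq⟩ (lt_of_lt_of_le (lt_min_iff.mp h₁).1 hk)

theorem asgn_agree (f : List Bool → Bool) (jv : ℕ) (c₁ c₂ : Fin n → Bool)
    (hag : ∀ j' : Fin n, (j' : ℕ) < jv → c₁ j' = c₂ j')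
    (w : Fin n × Bool) (hw : pos w < 2 * jv) :
    asgn n f c₁ w = asgn n f c₂ w := by
  obtain ⟨j', t'⟩ := w
  have hj' : (j' : ℕ) < jv := by
    simp only [pos] at hw
    cases t' <;> simp at hw <;> omega
  cases t' with
  | true =>
    simp only [asgn, if_true]
    exact hag j' hj'
  | false =>
    simp only [asgn, Bool.false_eq_true, if_false]
    rw [take_ofFn_agree jv c₁ c₂ hag (le_of_lt hj')]

theorem extc_agree (L : List Bool) (c : Bool) (j' : Fin n) (hj : (j' : ℕ) < L.length) :
    extc n (L ++ [c]) j' = extc n L j' := by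
  simp only [extc]
  rw [List.getD_append _ _ _ _ hj]

theorem take_ofFn_extc (L : List Bool) (jv : ℕ) (hj : jv ≤ L.length) (hn : jv ≤ n) :
    (List.ofFn (extc n L)).take jv = L.take jv := by
  apply List.ext_getElem
  · simp; omega
  · intro q h₁ h₂
    rw [List.getElem_take, List.getElem_take]
    simp only [List.length_take, List.length_ofFn] at h₁
    have hq : q < n := (lt_min_iff.mp h₁).2
    have hqL : q < L.length := by
      have := (lt_min_iff.mp h₁).1
      omega
    rw [List.getElem_ofFn]
    simp only [extc]
    rw [List.getD_eq_getElem _ _ hqL]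

theorem extc_getD_last (L : List Bool) (c : Bool) (j' : Fin n) (hj : (j' : ℕ) = L.length) :
    extc n (L ++ [c]) j' = c := by
  simp only [extc, hj]
  rw [List.getD_eq_getElem _ _ (by simp)]
  simp

theorem extc_ofFn (c : Fin n → Bool) : extc n (List.ofFn c) = c := by
  funext j
  simp only [extc]
  rw [List.getD_eq_getElem _ _ (by simp [j.isLt]), List.getElem_ofFn]

theorem pos_lt (w : Fin n × Bool) : pos w < 2 * n := by
  have := w.1.isLt
  simp only [pos]
  cases w.2 <;> simp <;> omega

end Assign

section Forward

variable {n m : ℕ} {Φ : Fin m → Finset ((Fin n × Bool) × Bool)}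

/-- The universal values recorded in a history. -/
def ys (h : List (QSt n)) : List Bool :=
  h.filterMap (fun s => match s with | QSt.asg _ true b => some b | _ => none)

/-- The (deterministic) action taken by the policy built from Skolem
function `f`. -/
def detAct (f : List Bool → Bool) (h : List (QSt n)) : QAct :=
  match h.getLast? with
  | some (QSt.var _ false) => some (f (ys h))
  | _ => none

/-- The deterministic policy built from Skolem function `f`. -/
noncomputable def σdet (f : List Bool → Bool) : List (QSt n) → QAct → ℝ :=
  fun h a => if a = detAct f h then 1 else 0

theorem σdet_policy (f : List Bool → Bool) : IsPolicy (σdet (n := n) f) := by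
  intro h
  constructor
  · intro a; simp only [σdet]; split <;> norm_num
  · simp only [σdet]
    rw [Finset.sum_ite_eq']
    simp

theorem ys_append_var (h : List (QSt n)) (j : Fin n) (t : Bool) :
    ys (h ++ [QSt.var j t]) = ys h := by
  simp [ys, List.filterMap_append]

theorem ys_append_asgF (h : List (QSt n)) (j : Fin n) (b : Bool) :
    ys (h ++ [QSt.asg j false b]) = ys h := by
  simp [ys, List.filterMap_append]

theorem ys_append_asgT (h : List (QSt n)) (j : Fin n) (b : Bool) :
    ys (h ++ [QSt.asg j true b]) = ys h ++ [b] := by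
  simp [ys, List.filterMap_append]

theorem detAct_varF (f : List Bool → Bool) (h : List (QSt n)) (j : Fin n) :
    detAct f (h ++ [QSt.var j false]) = some (f (ys h)) := by
  simp only [detAct, List.getLast?_concat, ys_append_var]

theorem detAct_varT (f : List Bool → Bool) (h : List (QSt n)) (j : Fin n) :
    detAct f (h ++ [QSt.var j true]) = none := by
  simp only [detAct, List.getLast?_concat]

theorem detAct_asg (f : List Bool → Bool) (h : List (QSt n)) (j : Fin n) (t b : Bool) :
    detAct f (h ++ [QSt.asg j t b]) = none := by
  simp only [detAct, List.getLast?_concat]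

theorem win_of_skolem (Φ : Fin m → Finset ((Fin n × Bool) × Bool)) (f : List Bool → Bool)
    (i : Fin m) (Hf : ∀ c : Fin n → Bool, ∃ l ∈ Φ i, asgn n f c l.1 = l.2) :
    ∀ (d jv : ℕ) (hj : jv < n) (h : List (QSt n)) (cpre : List Bool),
      jv + d = n → cpre.length = jv → ys h = cpre →
      (∀ l ∈ Φ i, pos l.1 < 2 * jv → asgn n f (extc n cpre) l.1 ≠ l.2) →
      reachN (QP n m Φ i) (σdet f) {QSt.win} (4*d) h (QSt.var ⟨jv, hj⟩ false) = 1 := by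
  intro d
  induction d with
  | zero => intro jv hj h cpre hd; omega
  | succ d' ih =>
    intro jv hj h cpre hd hlen hys H1
    set j : Fin n := ⟨jv, hj⟩ with hjdef
    have h4 : 4 * (d' + 1) = (4 * d' + 1 + 1 + 1) + 1 := by ring
    rw [h4, step_varF]
    set h1 : List (QSt n) := h ++ [QSt.var j false] with hh1
    have hσ1 : ∀ b : Bool, σdet f h1 (some b) = if b = f cpre then 1 else 0 := by
      intro b
      simp only [σdet, hh1, detAct_varF, hys]
      by_cases hb : b = f cpre <;> simp [hb]
    rw [Finset.sum_congr rfl (fun b _ => by rw [hσ1 b])]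
    rw [sum_ind (A := f cpre) 1 (fun b => reachN (QP n m Φ i) (σdet f) {QSt.win}
      (4 * d' + 1 + 1 + 1) h1 (QSt.asg j false b))]
    rw [one_mul]
    rw [step_asg]
    set h2 : List (QSt n) := h1 ++ [QSt.asg j false (f cpre)] with hh2
    have hσ2 : σdet f h2 none = 1 := by simp [σdet, hh2, detAct_asg]
    rw [hσ2, one_mul]
    by_cases hm1 : ((j, false), f cpre) ∈ Φ i
    · rw [if_pos hm1]
    rw [if_neg hm1]
    have hnv1 : nextVar n j false = QSt.var j true := by simp [nextVar]
    rw [hnv1, step_varT]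
    set h3 : List (QSt n) := h2 ++ [QSt.var j true] with hh3
    have hσ3 : σdet f h3 none = 1 := by simp [σdet, hh3, detAct_varT]
    rw [hσ3, one_mul]
    have hRc : ∀ c : Bool,
        reachN (QP n m Φ i) (σdet f) {QSt.win} (4 * d' + 1) h3 (QSt.asg j true c) = 1 := by
      intro c
      rw [step_asg]
      set h4c : List (QSt n) := h3 ++ [QSt.asg j true c] with hh4
      have hσ4 : σdet f h4c none = 1 := by simp [σdet, hh4, detAct_asg]
      rw [hσ4, one_mul]
      by_cases hm2 : ((j, true), c) ∈ Φ i
      · rw [if_pos hm2]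
      rw [if_neg hm2]
      -- new exclusion hypothesis for the extended prefix
      have H1' : ∀ l ∈ Φ i, pos l.1 < 2 * (jv + 1) →
          asgn n f (extc n (cpre ++ [c])) l.1 ≠ l.2 := by
        intro l hl hpos
        rcases Nat.lt_or_ge (pos l.1) (2 * jv) with hlt | hge
        · have hagree : asgn n f (extc n (cpre ++ [c])) l.1 = asgn n f (extc n cpre) l.1 := by
            apply asgn_agree f jv
            · intro j'' hj''
              exact extc_agree cpre c j'' (by omega)
            · exact hlt
          rw [hagree]
          exact H1 l hl hlt
        · obtain ⟨⟨j', t'⟩, b'⟩ := l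
          have hj'v : (j' : ℕ) = jv := by
            simp only [pos] at hpos hge
            cases t' <;> simp at hpos hge <;> omega
          have hj'j : j' = j := by apply Fin.ext; simp [hj'v, hjdef]
          cases t' with
          | false =>
            -- value is f cpre
            have hval : asgn n f (extc n (cpre ++ [c])) (j', false) = f cpre := by
              simp only [asgn, Bool.false_eq_true, if_false]
              rw [show ((j' : ℕ)) = jv from hj'v]
              rw [take_ofFn_extc (cpre ++ [c]) jv (by simp [hlen]) (le_of_lt hj)]
              rw [show jv = cpre.length from hlen.symm, List.take_left]
            rw [hval]
            intro hb'
            apply hm1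
            rw [hj'j] at hl
            have hbb : b' = f cpre := hb'.symm
            rw [hbb] at hl
            exact hl
          | true =>
            have hval : asgn n f (extc n (cpre ++ [c])) (j', true) = c := by
              simp only [asgn, if_true]
              exact extc_getD_last cpre c j' (by omega)
            rw [hval]
            intro hb'
            apply hm2
            rw [hj'j] at hl
            have hbb : b' = c := hb'.symm
            rw [hbb] at hl
            exact hl
      by_cases hlt : jv + 1 < n
      · have hnv2 : nextVar n j true = QSt.var ⟨jv + 1, hlt⟩ false := by
          simp [nextVar, hjdef, hlt]
        rw [hnv2]
        exact ih (jv + 1) hlt h4c (cpre ++ [c]) (by omega) (by simp [hlen])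
          (by rw [hh4, ys_append_asgT, hh3, ys_append_var, hh2, ys_append_asgF,
                hh1, ys_append_var, hys]) H1'
      · -- reached the last variable: contradiction with Hf
        exfalso
        obtain ⟨l, hl, hval⟩ := Hf (extc n (cpre ++ [c]))
        have hend : (2 : ℕ) * n = 2 * (jv + 1) := by omega
        exact H1' l hl (by rw [← hend]; exact pos_lt l.1) hval
    rw [hRc true, hRc false]
    norm_num

end Forward


section Extract

variable {n m : ℕ} {Φ : Fin m → Finset ((Fin n × Bool) × Bool)}

theorem policy_le_one {S A : Type*} [Fintype A] {σ : List S → A → ℝ}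
    (hσ : IsPolicy σ) (h : List S) (a : A) : σ h a ≤ 1 := by
  have := Finset.single_le_sum (f := σ h) (fun b _ => (hσ h).1 b) (Finset.mem_univ a)
  rw [(hσ h).2] at this
  exact this

/-- A choice of action with positive probability, if one exists. -/
noncomputable def chooseB (σ : List (QSt n) → QAct → ℝ) (h : List (QSt n)) : Bool :=
  if hb : ∃ b, 0 < σ h (some b) then hb.choose else true

/-- The canonical history associated to a (reversed) list of universal
values, following the actions chosen by `chooseB`. -/
noncomputable def auxH (σ : List (QSt n) → QAct → ℝ) : List Bool → List (QSt n)
  | [] => []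
  | c :: r =>
    if hj : r.length < n then
      auxH σ r ++ [QSt.var ⟨r.length, hj⟩ false,
        QSt.asg ⟨r.length, hj⟩ false (chooseB σ (auxH σ r ++ [QSt.var ⟨r.length, hj⟩ false])),
        QSt.var ⟨r.length, hj⟩ true,
        QSt.asg ⟨r.length, hj⟩ true c]
    else []

noncomputable def gsk (σ : List (QSt n) → QAct → ℝ) (r : List Bool) : Bool :=
  if hl : r.length < n then chooseB σ (auxH σ r ++ [QSt.var ⟨r.length, hl⟩ false]) else true

/-- The Skolem function extracted from a policy. -/
noncomputable def fsk (σ : List (QSt n) → QAct → ℝ) (l : List Bool) : Bool :=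
  gsk σ l.reverse

theorem extract_inv (hn : 0 < n) {σ : List (QSt n) → QAct → ℝ} (hσ : IsPolicy σ)
    (hwin : ∀ i : Fin m,
      reachN (QP n m Φ i) σ {QSt.win} (4*n) [] (QSt.var ⟨0, hn⟩ false) = 1) :
    ∀ r : List Bool, r.length ≤ n → ∀ i : Fin m,
      (∃ l ∈ Φ i, pos l.1 < 2 * r.length ∧ asgn n (fsk σ) (extc n r.reverse) l.1 = l.2)
      ∨ ∃ hj : r.length < n,
          reachN (QP n m Φ i) σ {QSt.win} (4*(n - r.length)) (auxH σ r)
            (QSt.var ⟨r.length, hj⟩ false) = 1 := by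
  intro r
  induction r with
  | nil =>
    intro _ i
    right
    exact ⟨hn, by simpa [auxH] using hwin i⟩
  | cons c r ih =>
    intro hlen i
    have hr : r.length < n := by simp only [List.length_cons] at hlen; omega
    rcases ih (le_of_lt hr) i with ⟨l, hl, hpos, hval⟩ | ⟨hj, hreach⟩
    · left
      refine ⟨l, hl, ?_, ?_⟩
      · simp only [List.length_cons]; omega
      · have hrev : (c :: r).reverse = r.reverse ++ [c] := by simp
        have hag : asgn n (fsk σ) (extc n ((c :: r).reverse)) l.1
            = asgn n (fsk σ) (extc n r.reverse) l.1 := by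
          rw [hrev]
          apply asgn_agree _ r.length
          · intro j'' hj''
            exact extc_agree _ c j'' (by simpa using hj'')
          · exact hpos
        rw [hag]; exact hval
    · set j : Fin n := ⟨r.length, hj⟩ with hjdef
      have hd : 4 * (n - r.length) = (4*(n - (r.length+1)) + 1 + 1 + 1) + 1 := by omega
      rw [hd, step_varF] at hreach
      have hw0 : ∀ b : Bool, 0 ≤ σ (auxH σ r ++ [QSt.var j false]) (some b) :=
        fun b => (hσ _).1 _
      have hv1 : ∀ b : Bool, reachN (QP n m Φ i) σ {QSt.win} (4*(n - (r.length+1))+1+1+1)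
          (auxH σ r ++ [QSt.var j false]) (QSt.asg j false b) ≤ 1 :=
        fun b => reachN_le_one QP_kernel hσ _ _ _
      have hv0 : ∀ b : Bool, 0 ≤ reachN (QP n m Φ i) σ {QSt.win} (4*(n - (r.length+1))+1+1+1)
          (auxH σ r ++ [QSt.var j false]) (QSt.asg j false b) :=
        fun b => reachN_nonneg QP_kernel hσ _ _ _
      have hsome : σ (auxH σ r ++ [QSt.var j false]) none
          + ∑ b : Bool, σ (auxH σ r ++ [QSt.var j false]) (some b) = 1 := by
        rw [← Fintype.sum_option]
        exact (hσ _).2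
      have hsb : ∑ b : Bool, σ (auxH σ r ++ [QSt.var j false]) (some b) = 1 := by
        have hle : ∑ b : Bool, σ (auxH σ r ++ [QSt.var j false]) (some b) ≤ 1 := by
          have := (hσ (auxH σ r ++ [QSt.var j false])).1 none
          linarith
        have hge : (1:ℝ) ≤ ∑ b : Bool, σ (auxH σ r ++ [QSt.var j false]) (some b) := by
          calc (1:ℝ) = ∑ b : Bool, σ (auxH σ r ++ [QSt.var j false]) (some b) *
                reachN (QP n m Φ i) σ {QSt.win} (4*(n - (r.length+1))+1+1+1)
                  (auxH σ r ++ [QSt.var j false]) (QSt.asg j false b) := hreach.symm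
            _ ≤ ∑ b : Bool, σ (auxH σ r ++ [QSt.var j false]) (some b) * 1 :=
                Finset.sum_le_sum fun b _ => mul_le_mul_of_nonneg_left (hv1 b) (hw0 b)
            _ = _ := by simp
        linarith
      have hex : ∃ b, 0 < σ (auxH σ r ++ [QSt.var j false]) (some b) := by
        by_contra hne
        push_neg at hne
        have h0 : ∀ b, σ (auxH σ r ++ [QSt.var j false]) (some b) = 0 :=
          fun b => le_antisymm (hne b) (hw0 b)
        rw [Fintype.sum_bool, h0, h0] at hsb
        norm_num at hsb
      have hb₀pos : 0 < σ (auxH σ r ++ [QSt.var j false])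
          (some (chooseB σ (auxH σ r ++ [QSt.var j false]))) := by
        rw [chooseB, dif_pos hex]
        exact hex.choose_spec
      have hR1b : reachN (QP n m Φ i) σ {QSt.win} (4*(n - (r.length+1))+1+1+1)
          (auxH σ r ++ [QSt.var j false])
          (QSt.asg j false (chooseB σ (auxH σ r ++ [QSt.var j false]))) = 1 :=
        extract_one hw0 hsb hv1 hreach _ hb₀pos
      rw [step_asg] at hR1b
      have hin1 : (if ((j, false), chooseB σ (auxH σ r ++ [QSt.var j false])) ∈ Φ i then (1:ℝ)
          else reachN (QP n m Φ i) σ {QSt.win} (4*(n - (r.length+1))+1+1)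
            ((auxH σ r ++ [QSt.var j false]) ++
              [QSt.asg j false (chooseB σ (auxH σ r ++ [QSt.var j false]))])
            (nextVar n j false)) = 1 := by
        refine mul_eq_one_right ((hσ _).1 none) (policy_le_one hσ _ _) ?_ hR1b
        split
        · exact le_refl 1
        · exact reachN_le_one QP_kernel hσ _ _ _
      -- value of the extracted Skolem function at this prefix
      have hfsk : asgn n (fsk σ) (extc n ((c :: r).reverse)) (j, false)
          = chooseB σ (auxH σ r ++ [QSt.var j false]) := by
        simp only [asgn, Bool.false_eq_true, if_false]
        have hrev : (c :: r).reverse = r.reverse ++ [c] := by simp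
        rw [hrev]
        rw [take_ofFn_extc (r.reverse ++ [c]) r.length (by simp) (le_of_lt hj)]
        rw [show r.length = r.reverse.length from List.length_reverse.symm, List.take_left]
        show gsk σ r.reverse.reverse = _
        rw [List.reverse_reverse, gsk, dif_pos hj]
      by_cases hm1 : ((j, false), chooseB σ (auxH σ r ++ [QSt.var j false])) ∈ Φ i
      · left
        refine ⟨((j, false), chooseB σ (auxH σ r ++ [QSt.var j false])), hm1, ?_, hfsk⟩
        have hj1 : ((j : Fin n) : ℕ) = r.length := rfl
        simp only [pos, List.length_cons, Bool.false_eq_true, if_false, if_true]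
        omega
      · rw [if_neg hm1] at hin1
        have hnv : nextVar n j false = QSt.var j true := by simp [nextVar]
        rw [hnv, step_varT] at hin1
        have hin2 : (1:ℝ)/2 * reachN (QP n m Φ i) σ {QSt.win} (4*(n - (r.length+1))+1)
              (((auxH σ r ++ [QSt.var j false]) ++
                [QSt.asg j false (chooseB σ (auxH σ r ++ [QSt.var j false]))]) ++ [QSt.var j true])
              (QSt.asg j true true)
            + 1/2 * reachN (QP n m Φ i) σ {QSt.win} (4*(n - (r.length+1))+1)
              (((auxH σ r ++ [QSt.var j false]) ++
                [QSt.asg j false (chooseB σ (auxH σ r ++ [QSt.var j false]))]) ++ [QSt.var j true])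
              (QSt.asg j true false) = 1 := by
          refine mul_eq_one_right ((hσ _).1 none) (policy_le_one hσ _ _) ?_ hin1
          have h1 := reachN_le_one (p := QP n m Φ i) (T := {QSt.win}) QP_kernel hσ
            (4*(n - (r.length+1))+1) (((auxH σ r ++ [QSt.var j false]) ++
              [QSt.asg j false (chooseB σ (auxH σ r ++ [QSt.var j false]))]) ++ [QSt.var j true])
            (QSt.asg j true true)
          have h2 := reachN_le_one (p := QP n m Φ i) (T := {QSt.win}) QP_kernel hσ
            (4*(n - (r.length+1))+1) (((auxH σ r ++ [QSt.var j false]) ++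
              [QSt.asg j false (chooseB σ (auxH σ r ++ [QSt.var j false]))]) ++ [QSt.var j true])
            (QSt.asg j true false)
          linarith
        have hRc : reachN (QP n m Φ i) σ {QSt.win} (4*(n - (r.length+1))+1)
            (((auxH σ r ++ [QSt.var j false]) ++
              [QSt.asg j false (chooseB σ (auxH σ r ++ [QSt.var j false]))]) ++ [QSt.var j true])
            (QSt.asg j true c) = 1 := by
          have h1 := reachN_le_one (p := QP n m Φ i) (T := {QSt.win}) QP_kernel hσ
            (4*(n - (r.length+1))+1) (((auxH σ r ++ [QSt.var j false]) ++
              [QSt.asg j false (chooseB σ (auxH σ r ++ [QSt.var j false]))]) ++ [QSt.var j true])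
            (QSt.asg j true true)
          have h2 := reachN_le_one (p := QP n m Φ i) (T := {QSt.win}) QP_kernel hσ
            (4*(n - (r.length+1))+1) (((auxH σ r ++ [QSt.var j false]) ++
              [QSt.asg j false (chooseB σ (auxH σ r ++ [QSt.var j false]))]) ++ [QSt.var j true])
            (QSt.asg j true false)
          cases c
          · linarith
          · linarith
        rw [step_asg] at hRc
        have hin3 : (if ((j, true), c) ∈ Φ i then (1:ℝ)
            else reachN (QP n m Φ i) σ {QSt.win} (4*(n - (r.length+1)))
              ((((auxH σ r ++ [QSt.var j false]) ++
                [QSt.asg j false (chooseB σ (auxH σ r ++ [QSt.var j false]))]) ++ [QSt.var j true])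
                ++ [QSt.asg j true c])
              (nextVar n j true)) = 1 := by
          refine mul_eq_one_right ((hσ _).1 none) (policy_le_one hσ _ _) ?_ hRc
          split
          · exact le_refl 1
          · exact reachN_le_one QP_kernel hσ _ _ _
        by_cases hm2 : ((j, true), c) ∈ Φ i
        · left
          refine ⟨((j, true), c), hm2, ?_, ?_⟩
          · have hj1 : ((j : Fin n) : ℕ) = r.length := rfl
            simp only [pos, List.length_cons, Bool.false_eq_true, if_false, if_true]
            omega
          · show asgn n (fsk σ) (extc n ((c :: r).reverse)) (j, true) = c
            simp only [asgn, if_true]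
            have hrev : (c :: r).reverse = r.reverse ++ [c] := by simp
            rw [hrev]
            exact extc_getD_last r.reverse c j (by simp [hjdef])
        · rw [if_neg hm2] at hin3
          by_cases hlt : r.length + 1 < n
          · right
            refine ⟨by simpa using hlt, ?_⟩
            have hnv2 : nextVar n j true = QSt.var ⟨r.length + 1, hlt⟩ false := by
              simp [nextVar, hjdef, hlt]
            rw [hnv2] at hin3
            have hauxeq : auxH σ (c :: r)
                = (((auxH σ r ++ [QSt.var j false]) ++
                    [QSt.asg j false (chooseB σ (auxH σ r ++ [QSt.var j false]))]) ++
                    [QSt.var j true]) ++ [QSt.asg j true c] := by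
              show (if hj' : r.length < n then _ else _) = _
              rw [dif_pos hj]
              simp [List.append_assoc, hjdef]
            show reachN (QP n m Φ i) σ {QSt.win} (4*(n - (r.length+1))) (auxH σ (c :: r))
              (QSt.var ⟨r.length + 1, _⟩ false) = 1
            rw [hauxeq]
            exact hin3
          · exfalso
            have hnv3 : nextVar n j true = QSt.sink := by
              simp [nextVar, hjdef, hlt]
            rw [hnv3, reachN_sink] at hin3
            norm_num at hin3

end Extract

/-- The MEMDP `𝒬` built from the QBF `∃x₁∀y₁…∃x_n∀y_n ⋀_i Φ_i`, with one
environment per clause, has a policy almost-surely reaching `{W}` in every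
environment iff the QBF is true. -/
theorem qbf_reduction (n m : ℕ) (hn : 0 < n)
    (Φ : Fin m → Finset ((Fin n × Bool) × Bool)) :
    (∃ σ : List (QSt n) → QAct → ℝ, IsPolicy σ ∧
        ∀ i : Fin m,
          (⨆ k, reachN (QP n m Φ i) σ {QSt.win} k [] (QSt.var ⟨0, hn⟩ false)) = 1)
      ↔ QBFTrue n (fun v => ∀ i : Fin m, ∃ l ∈ Φ i, v l.1 = l.2) := by
  rw [qbf_skolem]
  have hrank : rank n (QSt.var ⟨0, hn⟩ false) = 4 * n := by simp [rank]
  constructor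
  · rintro ⟨σ, hσ, hws⟩
    have hwin : ∀ i, reachN (QP n m Φ i) σ {QSt.win} (4*n) [] (QSt.var ⟨0, hn⟩ false) = 1 := by
      intro i
      have h1 := hws i
      rw [iSup_reach hσ] at h1
      rw [← hrank]
      exact h1
    refine ⟨fsk σ, fun c i => ?_⟩
    have hinv := extract_inv hn hσ hwin (List.ofFn c).reverse (by simp) i
    rcases hinv with ⟨l, hl, _, hval⟩ | ⟨hj, _⟩
    · refine ⟨l, hl, ?_⟩
      rw [List.reverse_reverse, extc_ofFn] at hval
      exact hval
    · exfalso
      rw [List.length_reverse, List.length_ofFn] at hj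
      omega
  · rintro ⟨f, hf⟩
    refine ⟨σdet f, σdet_policy f, fun i => ?_⟩
    rw [iSup_reach (σdet_policy f), hrank]
    exact win_of_skolem Φ f i (fun c => hf c i) n 0 hn [] [] (by omega) rfl rfl
      (fun l hl hp => absurd hp (by omega))
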